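/- arXiv:1707.06900 — 2 statements merged into one kernel-verified Lean document; each statement's English description precedes it below -/
import Mathlib

section
/- Let M(α) be the N×N matrix with entries [M(α)]_{ij} = P_{ij}^α · e^{-α(1-α)β_i²/2}, where P is an irreducible aperiodic stochastic matrix with strictly positive entries and β ∈ ℝ^N. Then the function α ↦ log λ(α), where λ(α) is the spectral radius (Perron eigenvalue) of M(α), is convex on ℝ. -/
/-!
Each entry of `M(α)` is the exponential of a convex quadratic in `α`, hence log-convex.
Log-convex functions are closed under products and, by Hölder's inequality, under sums, so every
entry of `M(α) ^ k` and the sum `S_k(α)` of these entries are log-convex. For a nonnegative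
matrix the `ℓ∞` operator norm lies between `S_k / N` and `S_k`, so Gelfand's formula gives
`log S_k(α) / k → log λ(α)`; here `λ(α) > 0` because `λ(α)` dominates the diagonal entries of
`M(α)`. A pointwise limit of convex functions is convex.
-/

open Filter Finset Real Set Topology

def LogConvexOn {E : Type*} [AddCommGroup E] [Module ℝ E] (s : Set E) (f : E → ℝ) : Prop :=
  (∀ x ∈ s, 0 < f x) ∧ ConvexOn ℝ s fun x => log (f x)

section LogConvex

variable {E : Type*} [AddCommGroup E] [Module ℝ E] {s : Set E} {f g : E → ℝ}

theorem ConvexOn.logConvexOn_exp (hg : ConvexOn ℝ s g) : LogConvexOn s fun x => exp (g x) :=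
  ⟨fun x _ => exp_pos _, by simpa only [log_exp] using hg⟩

theorem convexOn_of_tendsto {ι : Type*} {l : Filter ι} [l.NeBot] {f : ι → E → ℝ} {g : E → ℝ}
    (hf : ∀ᶠ i in l, ConvexOn ℝ s (f i)) (hg : ∀ x ∈ s, Tendsto (fun i => f i x) l (𝓝 (g x))) :
    ConvexOn ℝ s g := by
  obtain ⟨i, hi⟩ := hf.exists
  refine ⟨hi.1, fun x hx y hy a b ha hb hab => ?_⟩
  exact le_of_tendsto_of_tendsto (hg _ (hi.1 hx hy ha hb hab))
    (((hg x hx).const_smul a).add ((hg y hy).const_smul b))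
    (hf.mono fun i hi => hi.2 hx hy ha hb hab)

namespace LogConvexOn

theorem le_rpow_mul_rpow (hf : LogConvexOn s f) {x y : E} (hx : x ∈ s) (hy : y ∈ s) {a b : ℝ}
    (ha : 0 ≤ a) (hb : 0 ≤ b) (hab : a + b = 1) : f (a • x + b • y) ≤ f x ^ a * f y ^ b := by
  rw [← exp_log (hf.1 _ (hf.2.1 hx hy ha hb hab)), rpow_def_of_pos (hf.1 x hx),
    rpow_def_of_pos (hf.1 y hy), ← exp_add, exp_le_exp, mul_comm (log (f x)),
    mul_comm (log (f y))]
  exact hf.2.2 hx hy ha hb hab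

theorem mul (hf : LogConvexOn s f) (hg : LogConvexOn s g) : LogConvexOn s fun x => f x * g x :=
  ⟨fun x hx => mul_pos (hf.1 x hx) (hg.1 x hx),
    (hf.2.add hg.2).congr fun x hx => (log_mul (hf.1 x hx).ne' (hg.1 x hx).ne').symm⟩

-- Hölder's inequality with the conjugate exponents `1 / a` and `1 / b`.
theorem sum {ι : Type*} {t : Finset ι} (ht : t.Nonempty) {f : ι → E → ℝ}
    (hf : ∀ i ∈ t, LogConvexOn s (f i)) : LogConvexOn s fun x => ∑ i ∈ t, f i x := by
  obtain ⟨i₀, hi₀⟩ := ht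
  have hpos : ∀ x ∈ s, 0 < ∑ i ∈ t, f i x := fun x hx =>
    sum_pos (fun i hi => (hf i hi).1 x hx) ⟨i₀, hi₀⟩
  refine ⟨hpos, convexOn_iff_forall_pos.2 ⟨(hf i₀ hi₀).2.1, fun x hx y hy a b ha hb hab => ?_⟩⟩
  have hpow : ∀ z ∈ s, ∀ c : ℝ, ∀ i ∈ t, 0 ≤ f i z ^ c := fun z hz c i hi =>
    (rpow_pos_of_pos ((hf i hi).1 z hz) c).le
  have hxy : a • x + b • y ∈ s := (hf i₀ hi₀).2.1 hx hy ha.le hb.le hab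
  suffices ∑ i ∈ t, f i (a • x + b • y) ≤ (∑ i ∈ t, f i x) ^ a * (∑ i ∈ t, f i y) ^ b by
    rw [smul_eq_mul, smul_eq_mul, ← log_rpow (hpos x hx), ← log_rpow (hpos y hy),
      ← log_mul (rpow_pos_of_pos (hpos x hx) a).ne' (rpow_pos_of_pos (hpos y hy) b).ne']
    exact log_le_log (hpos _ hxy) this
  calc ∑ i ∈ t, f i (a • x + b • y) ≤ ∑ i ∈ t, f i x ^ a * f i y ^ b :=
        sum_le_sum fun i hi => (hf i hi).le_rpow_mul_rpow hx hy ha.le hb.le hab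
    _ ≤ (∑ i ∈ t, (f i x ^ a) ^ (1 / a)) ^ (1 / (1 / a)) *
          (∑ i ∈ t, (f i y ^ b) ^ (1 / b)) ^ (1 / (1 / b)) :=
        inner_le_Lp_mul_Lq_of_nonneg t (holderConjugate_one_div ha hb hab) (hpow x hx a)
          (hpow y hy b)
    _ = (∑ i ∈ t, f i x) ^ a * (∑ i ∈ t, f i y) ^ b := by
        simp only [one_div_one_div]
        congr 2 <;> refine sum_congr rfl fun i hi => ?_
        · rw [← rpow_mul ((hf i hi).1 x hx).le, mul_one_div_cancel ha.ne', rpow_one]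
        · rw [← rpow_mul ((hf i hi).1 y hy).le, mul_one_div_cancel hb.ne', rpow_one]

variable {n : Type*} [Fintype n] [Nonempty n] {A B : E → Matrix n n ℝ}

theorem matrix_mul (hA : ∀ i j, LogConvexOn s fun x => A x i j)
    (hB : ∀ i j, LogConvexOn s fun x => B x i j) (i j : n) :
    LogConvexOn s fun x => (A x * B x) i j :=
  sum univ_nonempty fun k _ => (hA i k).mul (hB k j)

theorem matrix_pow [DecidableEq n] (hA : ∀ i j, LogConvexOn s fun x => A x i j) {k : ℕ}
    (hk : k ≠ 0) (i j : n) : LogConvexOn s fun x => (A x ^ k) i j := by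
  induction k generalizing i j with
  | zero => exact absurd rfl hk
  | succ k ih =>
    rcases eq_or_ne k 0 with rfl | hk
    · simpa using hA i j
    · simpa only [pow_succ] using matrix_mul (ih hk) hA i j

end LogConvexOn

end LogConvex

theorem logConvexOn_rpow_mul_exp {p : ℝ} (hp : 0 < p) (b : ℝ) :
    LogConvexOn univ fun α : ℝ => p ^ α * exp (-α * (1 - α) * b ^ 2 / 2) := by
  have hquad : ConvexOn ℝ univ fun α : ℝ => (b ^ 2 / 2) • α ^ 2 + (log p - b ^ 2 / 2) * α :=
    (even_two.convexOn_pow.smul (by positivity)).add ((LinearMap.mul ℝ ℝ _).convexOn convex_univ)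
  convert hquad.logConvexOn_exp using 2 with α
  rw [rpow_def_of_pos hp, ← exp_add, smul_eq_mul]
  ring_nf

section Spectral

attribute [local instance] Matrix.linftyOpNormedAddCommGroup Matrix.linftyOpNormedRing
  Matrix.linftyOpNormedAlgebra

namespace Matrix

variable {m n : Type*} [Fintype m] [Fintype n]

theorem linfty_opNorm_map_ofReal (B : Matrix m n ℝ) : ‖B.map ((↑) : ℝ → ℂ)‖ = ‖B‖ := by
  simp only [linfty_opNorm_def, map_apply, Complex.nnnorm_real]

theorem sum_norm_le_linfty_opNorm (B : Matrix m n ℝ) (i : m) : ∑ j, ‖B i j‖ ≤ ‖B‖ := by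
  simp only [← coe_nnnorm, ← NNReal.coe_sum, NNReal.coe_le_coe, linfty_opNNNorm_def]
  exact Finset.le_sup (f := fun i => ∑ j, ‖B i j‖₊) (mem_univ i)

theorem linfty_opNorm_le_sum_of_nonneg {B : Matrix m n ℝ} (hB : ∀ i j, 0 ≤ B i j) :
    ‖B‖ ≤ ∑ i, ∑ j, B i j := by
  have : ‖B‖ ≤ ∑ i, ∑ j, ‖B i j‖ := by
    simp only [← coe_nnnorm, ← NNReal.coe_sum, NNReal.coe_le_coe, linfty_opNNNorm_def]
    exact Finset.sup_le fun i _ => single_le_sum (f := fun i => ∑ j, ‖B i j‖₊)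
      (fun _ _ => bot_le) (mem_univ i)
  simpa only [norm_of_nonneg (hB _ _)] using this

theorem sum_le_card_mul_linfty_opNorm (B : Matrix m n ℝ) :
    ∑ i, ∑ j, B i j ≤ Fintype.card m * ‖B‖ := by
  calc ∑ i, ∑ j, B i j ≤ ∑ i : m, ‖B‖ := sum_le_sum fun i _ =>
        (sum_le_sum fun j _ => le_norm_self (B i j)).trans (sum_norm_le_linfty_opNorm B i)
    _ = Fintype.card m * ‖B‖ := by rw [sum_const, card_univ, nsmul_eq_mul]

end Matrix

theorem spectrum.tendsto_norm_pow_rpow_toReal_spectralRadius {A : Type*} [NormedRing A]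
    [NormedAlgebra ℂ A] [CompleteSpace A] [NormOneClass A] (a : A) :
    Tendsto (fun k : ℕ => ‖a ^ k‖ ^ (1 / k : ℝ)) atTop (𝓝 (spectralRadius ℂ a).toReal) := by
  have hfin : spectralRadius ℂ a ≠ ⊤ :=
    ((spectrum.spectralRadius_le_nnnorm a).trans_lt ENNReal.coe_lt_top).ne
  refine ((ENNReal.tendsto_toReal hfin).comp
    (pow_norm_pow_one_div_tendsto_nhds_spectralRadius a)).congr fun k => ?_
  exact ENNReal.toReal_ofReal (by positivity)

namespace Matrix

variable {n : Type*} [Fintype n] [DecidableEq n] {B : Matrix n n ℝ}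

theorem tendsto_sum_pow_rpow_spectralRadius [Nonempty n] (hB : ∀ i j, 0 ≤ B i j) :
    Tendsto (fun k : ℕ => (∑ i, ∑ j, (B ^ k) i j) ^ (1 / k : ℝ)) atTop
      (𝓝 (spectralRadius ℂ (B.map ((↑) : ℝ → ℂ))).toReal) := by
  have hgelfand := spectrum.tendsto_norm_pow_rpow_toReal_spectralRadius (B.map ((↑) : ℝ → ℂ))
  have hnorm (k : ℕ) : ‖B.map ((↑) : ℝ → ℂ) ^ k‖ = ‖B ^ k‖ := by
    rw [← linfty_opNorm_map_ofReal]
    exact congrArg norm (B.map_pow Complex.ofRealHom k).symm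
  simp only [hnorm] at hgelfand
  have hcard : Tendsto (fun k : ℕ => (Fintype.card n : ℝ) ^ (1 / k : ℝ)) atTop (𝓝 1) := by
    simpa using tendsto_const_nhds.rpow tendsto_one_div_atTop_nhds_zero_nat
      (Or.inl (Nat.cast_ne_zero.2 Fintype.card_ne_zero))
  refine tendsto_of_tendsto_of_tendsto_of_le_of_le hgelfand
    (by simpa only [one_mul] using hcard.mul hgelfand) (fun k => ?_) fun k => ?_
  · exact rpow_le_rpow (norm_nonneg _)
      (linfty_opNorm_le_sum_of_nonneg (pow_apply_nonneg hB k)) (by positivity)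
  · calc (∑ i, ∑ j, (B ^ k) i j) ^ (1 / k : ℝ)
        ≤ (Fintype.card n * ‖B ^ k‖) ^ (1 / k : ℝ) :=
          rpow_le_rpow (sum_nonneg fun i _ => sum_nonneg fun j _ => pow_apply_nonneg hB k i j)
            (sum_le_card_mul_linfty_opNorm _) (by positivity)
      _ = (Fintype.card n : ℝ) ^ (1 / k : ℝ) * ‖B ^ k‖ ^ (1 / k : ℝ) :=
          mul_rpow (by positivity) (norm_nonneg _)

theorem apply_pow_le_pow_apply (hB : ∀ i j, 0 ≤ B i j) (i : n) (k : ℕ) :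
    B i i ^ k ≤ (B ^ k) i i := by
  induction k with
  | zero => simp
  | succ k ih =>
    rw [pow_succ, pow_succ, mul_apply]
    exact (mul_le_mul_of_nonneg_right ih (hB i i)).trans <| single_le_sum
      (fun j _ => mul_nonneg (pow_apply_nonneg hB k i j) (hB j i)) (mem_univ i)

theorem apply_pow_le_sum_pow (hB : ∀ i j, 0 ≤ B i j) (i : n) (k : ℕ) :
    B i i ^ k ≤ ∑ i, ∑ j, (B ^ k) i j :=
  (apply_pow_le_pow_apply hB i k).trans <|
    (single_le_sum (fun j _ => pow_apply_nonneg hB k i j) (mem_univ i)).trans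
      (single_le_sum (fun l _ => sum_nonneg fun j _ => pow_apply_nonneg hB k l j) (mem_univ i))

theorem apply_le_spectralRadius (hB : ∀ i j, 0 ≤ B i j) (i : n) :
    B i i ≤ (spectralRadius ℂ (B.map ((↑) : ℝ → ℂ))).toReal := by
  have : Nonempty n := ⟨i⟩
  refine ge_of_tendsto (tendsto_sum_pow_rpow_spectralRadius hB) ?_
  filter_upwards [eventually_ne_atTop 0] with k hk
  calc B i i = (B i i ^ k) ^ (1 / k : ℝ) := by rw [one_div, pow_rpow_inv_natCast (hB i i) hk]
    _ ≤ (∑ i, ∑ j, (B ^ k) i j) ^ (1 / k : ℝ) :=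
      rpow_le_rpow (pow_nonneg (hB i i) k) (apply_pow_le_sum_pow hB i k) (by positivity)

theorem tendsto_log_sum_pow_div (hB : ∀ i j, 0 ≤ B i j) {i : n} (hi : 0 < B i i) :
    Tendsto (fun k : ℕ => log (∑ i, ∑ j, (B ^ k) i j) / k) atTop
      (𝓝 (log (spectralRadius ℂ (B.map ((↑) : ℝ → ℂ))).toReal)) := by
  have : Nonempty n := ⟨i⟩
  have hρ := hi.trans_le (apply_le_spectralRadius hB i)
  refine ((continuousAt_log hρ.ne').tendsto.comp (tendsto_sum_pow_rpow_spectralRadius hB)).congr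
    fun k => ?_
  rw [Function.comp_apply, log_rpow ((pow_pos hi k).trans_le (apply_pow_le_sum_pow hB i k)),
    one_div_mul_eq_div]

end Matrix

end Spectral

theorem stmt12_general {N : ℕ} (P : Matrix (Fin N) (Fin N) ℝ) (β : Fin N → ℝ)
    (hP : ∀ i j, 0 < P i j) :
    ConvexOn ℝ Set.univ (fun α : ℝ =>
      Real.log ((spectralRadius ℂ
        ((Matrix.of fun i j =>
            Real.rpow (P i j) α * Real.exp (-α * (1 - α) * β i ^ 2 / 2)).map
          Complex.ofReal)).toReal)) := by
  rcases isEmpty_or_nonempty (Fin N) with hN | hN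
  · simpa [spectralRadius, spectrum.of_subsingleton] using convexOn_const (log 0) convex_univ
  set M : ℝ → Matrix (Fin N) (Fin N) ℝ := fun α => Matrix.of fun i j =>
    Real.rpow (P i j) α * Real.exp (-α * (1 - α) * β i ^ 2 / 2)
  have hM (i j : Fin N) : LogConvexOn univ fun α => M α i j :=
    logConvexOn_rpow_mul_exp (hP i j) (β i)
  refine convexOn_of_tendsto (l := atTop)
    (f := fun (k : ℕ) α => log (∑ i, ∑ j, (M α ^ k) i j) / k) ?_ fun α _ => ?_
  · filter_upwards [eventually_ne_atTop 0] with k hk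
    have hS : LogConvexOn univ fun α => ∑ i, ∑ j, (M α ^ k) i j :=
      .sum univ_nonempty fun i _ => .sum univ_nonempty fun j _ => .matrix_pow hM hk i j
    simpa only [div_eq_inv_mul, smul_eq_mul] using hS.2.smul (inv_nonneg.2 k.cast_nonneg)
  · obtain ⟨i₀⟩ := hN
    exact Matrix.tendsto_log_sum_pow_div (fun i j => ((hM i j).1 α trivial).le)
      ((hM i₀ i₀).1 α trivial)

theorem stmt12 {N : ℕ} (P : Matrix (Fin N) (Fin N) ℝ) (β : Fin N → ℝ)
    (hP : ∀ i j, 0 < P i j) (hrow : ∀ i, ∑ j, P i j = 1) :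
    ConvexOn ℝ Set.univ (fun α : ℝ =>
      Real.log ((spectralRadius ℂ
        ((Matrix.of fun i j =>
            Real.rpow (P i j) α * Real.exp (-α * (1 - α) * β i ^ 2 / 2)).map
          Complex.ofReal)).toReal)) :=
  stmt12_general P β hP
end

section
/- Consider, for θ ∈ Δ with all row sums θ̄_i > 0 and H(θ) > 0, the problem of minimizing ∑_i θ̄_i(β_i - ξ_i/θ̄_i)²/2 over ξ ∈ ℝ^N subject to ∑_i ξ_i²/(2θ̄_i) ≤ H(θ). If H(θ) < R(θ) := ∑_i θ̄_i β_i²/2, then the optimal value equals (√(R(θ)) - √(H(θ)))², attained at ξ_i* = sign(β_i)·θ̄_i·|β_i|·√(H(θ)/R(θ)); if H(θ) ≥ R(θ) the optimal value is 0, attained at ξ_i* = θ̄_i β_i. -/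
/-!
Writing `R = ∑ wᵢβᵢ²/2` and `g(ξ) = ∑ ξᵢ²/(2wᵢ)`, the objective expands as
`f(ξ) = R - ⟨β, ξ⟩ + g(ξ)`, and the weighted Cauchy–Schwarz inequality `⟨β, ξ⟩ ≤ 2√R √g(ξ)`
gives `f(ξ) ≥ (√R - √g(ξ))²`. On the constraint set `g(ξ) ≤ H` this is at least `(√R - √H)²`
when `H < R`. Along the ray `ξ = t • (wβ)` one has `g = t²R` and `f = (1 - t)²R`, so
`t = √(H/R)` attains the bound, and `t = 1` attains `0` when `R ≤ H`.
-/

open Finset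

theorem Real.sign_mul_abs (x : ℝ) : Real.sign x * |x| = x := by
  rcases lt_trichotomy x 0 with h | rfl | h
  · rw [Real.sign_of_neg h, abs_of_neg h]; ring
  · simp
  · rw [Real.sign_of_pos h, abs_of_pos h]; ring

section WeightedQuadratic

variable {ι : Type*} [Fintype ι] {w : ι → ℝ} (β : ι → ℝ)

theorem sum_mul_sub_div_sq_eq (hw : ∀ i, w i ≠ 0) (ξ : ι → ℝ) :
    ∑ i, w i * (β i - ξ i / w i) ^ 2 / 2 =
      ∑ i, w i * β i ^ 2 / 2 - ∑ i, β i * ξ i + ∑ i, ξ i ^ 2 / (2 * w i) := by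
  rw [← sum_sub_distrib, ← sum_add_distrib]
  refine sum_congr rfl fun i _ => ?_
  field_simp [hw i]
  ring

theorem sq_sum_mul_le_four_mul (hw : ∀ i, 0 < w i) (ξ : ι → ℝ) :
    (∑ i, β i * ξ i) ^ 2 ≤ 4 * (∑ i, w i * β i ^ 2 / 2) * ∑ i, ξ i ^ 2 / (2 * w i) := by
  have hcs : (∑ i, β i * ξ i / 2) ^ 2 ≤
      (∑ i, w i * β i ^ 2 / 2) * ∑ i, ξ i ^ 2 / (2 * w i) := by
    refine sum_sq_le_sum_mul_sum_of_sq_le_mul _ (fun i _ => by have := hw i; positivity)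
      (fun i _ => by have := hw i; positivity) fun i _ => le_of_eq ?_
    field_simp [(hw i).ne']
  rw [← sum_div] at hcs
  linarith

theorem sqrt_sub_sqrt_sq_le_sum_mul_sub_div_sq (hw : ∀ i, 0 < w i) (ξ : ι → ℝ) :
    (√(∑ i, w i * β i ^ 2 / 2) - √(∑ i, ξ i ^ 2 / (2 * w i))) ^ 2 ≤
      ∑ i, w i * (β i - ξ i / w i) ^ 2 / 2 := by
  set R := ∑ i, w i * β i ^ 2 / 2
  set g := ∑ i, ξ i ^ 2 / (2 * w i)
  have hR : 0 ≤ R := sum_nonneg fun i _ => by have := hw i; positivity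
  have hg : 0 ≤ g := sum_nonneg fun i _ => by have := hw i; positivity
  have hinner : ∑ i, β i * ξ i ≤ 2 * (√R * √g) := by
    rw [← Real.sqrt_mul hR, ← Real.sqrt_mul_self zero_le_two, ← Real.sqrt_mul (by norm_num)]
    exact Real.le_sqrt_of_sq_le (by linarith [sq_sum_mul_le_four_mul β hw ξ])
  rw [sum_mul_sub_div_sq_eq β (fun i => (hw i).ne') ξ]
  linarith [Real.sq_sqrt hR, Real.sq_sqrt hg]

theorem sum_mul_sub_smul_div_sq (hw : ∀ i, w i ≠ 0) (t : ℝ) :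
    ∑ i, w i * (β i - t * w i * β i / w i) ^ 2 / 2 = (1 - t) ^ 2 * ∑ i, w i * β i ^ 2 / 2 := by
  rw [mul_sum]
  refine sum_congr rfl fun i _ => ?_
  field_simp [hw i]

theorem sum_smul_sq_div (hw : ∀ i, w i ≠ 0) (t : ℝ) :
    ∑ i, (t * w i * β i) ^ 2 / (2 * w i) = t ^ 2 * ∑ i, w i * β i ^ 2 / 2 := by
  rw [mul_sum]
  refine sum_congr rfl fun i _ => ?_
  field_simp [hw i]

end WeightedQuadratic

theorem stmt18_general {N : ℕ} (θb β : Fin N → ℝ) (hθ : ∀ i, 0 < θb i)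
    (Hc : ℝ) (hH : 0 < Hc) :
    let R := ∑ i, θb i * β i ^ 2 / 2
    let f := fun ξ : Fin N → ℝ => ∑ i, θb i * (β i - ξ i / θb i) ^ 2 / 2
    let C := {ξ : Fin N → ℝ | (∑ i, ξ i ^ 2 / (2 * θb i)) ≤ Hc}
    (Hc < R →
      (fun i => Real.sign (β i) * θb i * |β i| * Real.sqrt (Hc / R)) ∈ C ∧
      f (fun i => Real.sign (β i) * θb i * |β i| * Real.sqrt (Hc / R)) =
        (Real.sqrt R - Real.sqrt Hc) ^ 2 ∧
      ∀ ξ ∈ C, (Real.sqrt R - Real.sqrt Hc) ^ 2 ≤ f ξ) ∧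
    (R ≤ Hc →
      (fun i => θb i * β i) ∈ C ∧ f (fun i => θb i * β i) = 0 ∧ ∀ ξ ∈ C, 0 ≤ f ξ) := by
  intro R f C
  have hθ₀ : ∀ i, θb i ≠ 0 := fun i => (hθ i).ne'
  refine ⟨fun hlt => ?_, fun hle => ?_⟩
  · have hR : 0 < R := hH.trans hlt
    set t := √(Hc / R)
    have ht : t ^ 2 * R = Hc := by
      rw [Real.sq_sqrt (div_pos hH hR).le, div_mul_cancel₀ _ hR.ne']
    have htR : t * √R = √Hc := by
      rw [← Real.sqrt_mul (div_pos hH hR).le, div_mul_cancel₀ _ hR.ne']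
    have hξ : (fun i => Real.sign (β i) * θb i * |β i| * t) = fun i => t * θb i * β i := by
      funext i
      linear_combination (θb i * t) * Real.sign_mul_abs (β i)
    rw [hξ]
    refine ⟨((sum_smul_sq_div β hθ₀ t).trans ht).le, ?_, fun ξ hξC => ?_⟩
    · change ∑ i, θb i * (β i - t * θb i * β i / θb i) ^ 2 / 2 = _
      rw [sum_mul_sub_smul_div_sq β hθ₀, ← htR]
      linear_combination -(1 - t) ^ 2 * Real.sq_sqrt hR.le
    · have hg : √(∑ i, ξ i ^ 2 / (2 * θb i)) ≤ √Hc := Real.sqrt_le_sqrt hξC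
      have hHR : √Hc ≤ √R := Real.sqrt_le_sqrt hlt.le
      calc (√R - √Hc) ^ 2 ≤ (√R - √(∑ i, ξ i ^ 2 / (2 * θb i))) ^ 2 := by gcongr
        _ ≤ f ξ := sqrt_sub_sqrt_sq_le_sum_mul_sub_div_sq β hθ ξ
  · refine ⟨?_, ?_, fun ξ _ => sum_nonneg fun i _ => by have := hθ i; positivity⟩
    · change ∑ i, (θb i * β i) ^ 2 / (2 * θb i) ≤ Hc
      simpa using (sum_smul_sq_div β hθ₀ 1).trans_le (by simpa using hle)
    · simpa using sum_mul_sub_smul_div_sq β hθ₀ 1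

theorem stmt18 {N : ℕ} (θb β : Fin N → ℝ) (hθ : ∀ i, 0 < θb i) (hsum : ∑ i, θb i = 1)
    (hβ : β ≠ 0) (Hc : ℝ) (hH : 0 < Hc) :
    let R := ∑ i, θb i * β i ^ 2 / 2
    let f := fun ξ : Fin N → ℝ => ∑ i, θb i * (β i - ξ i / θb i) ^ 2 / 2
    let C := {ξ : Fin N → ℝ | (∑ i, ξ i ^ 2 / (2 * θb i)) ≤ Hc}
    (Hc < R →
      (fun i => Real.sign (β i) * θb i * |β i| * Real.sqrt (Hc / R)) ∈ C ∧
      f (fun i => Real.sign (β i) * θb i * |β i| * Real.sqrt (Hc / R)) =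
        (Real.sqrt R - Real.sqrt Hc) ^ 2 ∧
      ∀ ξ ∈ C, (Real.sqrt R - Real.sqrt Hc) ^ 2 ≤ f ξ) ∧
    (R ≤ Hc →
      (fun i => θb i * β i) ∈ C ∧ f (fun i => θb i * β i) = 0 ∧ ∀ ξ ∈ C, 0 ≤ f ξ) :=
  stmt18_general θb β hθ Hc hH
end
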